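/- (Example B) Let 0 < r_1 < r_2 < r_3 < r_4. At the parade with angles (α_1, α_2, α_3, α_4) = (π, 0, π, 0) (signed coordinates x = (−r_1, r_2, −r_3, r_4)), the Hessian matrix of L with respect to (α_1, α_2, α_3) is negative definite; hence this parade is a nondegenerate local maximum of L (Morse index 3). -/

import Mathlib

/-!
Each chord satisfies `ell r r' θ ≤ r + r'`, with equality when `cos θ = -1`. At the parade
`(π, 0, π, 0)` every chord attains this bound, so the parade is even a global maximum of `L`.

`L` is a sum over the edges of the 4-cycle of functions of the angle differences, so its Hessian
is the weighted path Laplacian whose weights are the second derivatives `ell''` of the chords.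
At an angle with `cos θ = -1` one finds `ell'' = -r r' / (r + r') < 0`, so minus the Hessian is
the form `p x₁² + q (x₁ - x₂)² + s (x₂ - x₃)² + t x₃²` with positive weights.
-/

open Real

/-- Length of the chordal segment between points at radii `r`, `r'` whose polar angles
differ by `θ`. -/
noncomputable def ell (r r' θ : ℝ) : ℝ :=
  Real.sqrt (r ^ 2 + r' ^ 2 - 2 * r * r' * Real.cos θ)

/-- The perimeter of the connecting cycle for four concentric circles of radii
`r1, r2, r3, r4`, as a function of the polar angles `a1, a2, a3` of the first three
vertices, the fourth angle being fixed to `0`. -/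
noncomputable def L4 (r1 r2 r3 r4 : ℝ) (a1 a2 a3 : ℝ) : ℝ :=
  ell r1 r2 (a2 - a1) + ell r2 r3 (a3 - a2) + ell r3 r4 (0 - a3) + ell r4 r1 (a1 - 0)

/-- Partial derivative in the first of three variables. -/
noncomputable def pd1 (f : ℝ → ℝ → ℝ → ℝ) (a b c : ℝ) : ℝ := deriv (fun x => f x b c) a

/-- Partial derivative in the second of three variables. -/
noncomputable def pd2 (f : ℝ → ℝ → ℝ → ℝ) (a b c : ℝ) : ℝ := deriv (fun y => f a y c) b

/-- Partial derivative in the third of three variables. -/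
noncomputable def pd3 (f : ℝ → ℝ → ℝ → ℝ) (a b c : ℝ) : ℝ := deriv (fun z => f a b z) c

/-- The Hessian matrix of `L4 r1 r2 r3 r4` at `(a, b, c)` in the reduced coordinates
`(α₁, α₂, α₃)`. -/
noncomputable def hess4 (r1 r2 r3 r4 a b c : ℝ) : Matrix (Fin 3) (Fin 3) ℝ :=
  !![pd1 (pd1 (L4 r1 r2 r3 r4)) a b c, pd1 (pd2 (L4 r1 r2 r3 r4)) a b c,
       pd1 (pd3 (L4 r1 r2 r3 r4)) a b c;
     pd2 (pd1 (L4 r1 r2 r3 r4)) a b c, pd2 (pd2 (L4 r1 r2 r3 r4)) a b c,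
       pd2 (pd3 (L4 r1 r2 r3 r4)) a b c;
     pd3 (pd1 (L4 r1 r2 r3 r4)) a b c, pd3 (pd2 (L4 r1 r2 r3 r4)) a b c,
       pd3 (pd3 (L4 r1 r2 r3 r4)) a b c]

lemma ell_radicand_pos {r r' : ℝ} (hr : 0 < r) (hr' : 0 < r') (hne : r ≠ r') (θ : ℝ) :
    0 < r ^ 2 + r' ^ 2 - 2 * r * r' * cos θ := by
  have := sq_pos_of_ne_zero (sub_ne_zero.mpr hne)
  nlinarith [cos_le_one θ, mul_pos hr hr']

lemma contDiff_ell {r r' : ℝ} (hr : 0 < r) (hr' : 0 < r') (hne : r ≠ r') {n : WithTop ℕ∞} :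
    ContDiff ℝ n (ell r r') :=
  (by fun_prop : ContDiff ℝ n fun θ => r ^ 2 + r' ^ 2 - 2 * r * r' * cos θ).sqrt
    fun θ => (ell_radicand_pos hr hr' hne θ).ne'

lemma hasDerivAt_ell {r r' : ℝ} (hr : 0 < r) (hr' : 0 < r') (hne : r ≠ r') (θ : ℝ) :
    HasDerivAt (ell r r') (r * r' * sin θ / ell r r' θ) θ := by
  have h : HasDerivAt (ell r r') (-(2 * r * r' * -sin θ) / (2 * ell r r' θ)) θ :=
    (((hasDerivAt_cos θ).const_mul (2 * r * r')).const_sub (r ^ 2 + r' ^ 2)).sqrt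
      (ell_radicand_pos hr hr' hne θ).ne'
  convert h using 1
  field_simp

lemma ell_eq_add_of_cos_eq_neg_one {r r' θ : ℝ} (hr : 0 ≤ r) (hr' : 0 ≤ r')
    (hθ : cos θ = -1) : ell r r' θ = r + r' := by
  rw [ell, hθ, show r ^ 2 + r' ^ 2 - 2 * r * r' * -1 = (r + r') ^ 2 by ring,
    sqrt_sq (add_nonneg hr hr')]

lemma ell_le_add {r r' : ℝ} (hr : 0 ≤ r) (hr' : 0 ≤ r') (θ : ℝ) :
    ell r r' θ ≤ r + r' := by
  rw [← sqrt_sq (add_nonneg hr hr')]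
  exact sqrt_le_sqrt (by nlinarith [neg_one_le_cos θ, mul_nonneg hr hr'])

lemma deriv_deriv_ell_of_cos_eq_neg_one {r r' θ : ℝ} (hr : 0 < r) (hr' : 0 < r') (hne : r ≠ r')
    (hθ : cos θ = -1) : deriv (deriv (ell r r')) θ = -(r * r' / (r + r')) := by
  have hderiv : deriv (ell r r') = fun θ => r * r' * sin θ / ell r r' θ :=
    funext fun θ => (hasDerivAt_ell hr hr' hne θ).deriv
  have hsin : sin θ = 0 := by nlinarith [sin_sq_add_cos_sq θ]
  have h : HasDerivAt (fun θ => r * r' * sin θ / ell r r' θ) _ θ :=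
    ((hasDerivAt_sin θ).const_mul (r * r')).div (hasDerivAt_ell hr hr' hne θ)
      (sqrt_pos.mpr (ell_radicand_pos hr hr' hne θ)).ne'
  rw [hderiv, h.deriv, hsin, hθ, ell_eq_add_of_cos_eq_neg_one hr.le hr'.le hθ]
  field_simp
  ring

/-- The shape of `L4`. Its partial derivatives are again `cycleSum`s, so the second partials
of `L4` come from applying `pd1_cycleSum`, `pd2_cycleSum`, `pd3_cycleSum` twice. -/
def cycleSum (f g h k : ℝ → ℝ) (a b c : ℝ) : ℝ :=
  f (b - a) + g (c - b) + h (0 - c) + k (a - 0)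

section cycleSum

variable {f g h k : ℝ → ℝ}

lemma pd1_cycleSum (hf : Differentiable ℝ f) (hk : Differentiable ℝ k) :
    pd1 (cycleSum f g h k) = cycleSum (-deriv f) 0 0 (deriv k) := by
  ext a b c
  have hd : HasDerivAt (fun x => cycleSum f g h k x b c)
      (-deriv f (b - a) + deriv k (a - 0)) a :=
    (((hf _).hasDerivAt.comp_const_sub b a).add_const _ |>.add_const _).add
      ((hk _).hasDerivAt.comp_sub_const a 0)
  rw [pd1, hd.deriv, cycleSum]
  simp only [Pi.neg_apply, Pi.zero_apply, add_zero]

lemma pd2_cycleSum (hf : Differentiable ℝ f) (hg : Differentiable ℝ g) :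
    pd2 (cycleSum f g h k) = cycleSum (deriv f) (-deriv g) 0 0 := by
  ext a b c
  have hd : HasDerivAt (fun y => cycleSum f g h k a y c)
      (deriv f (b - a) + -deriv g (c - b)) b :=
    ((((hf _).hasDerivAt.comp_sub_const b a).add
      ((hg _).hasDerivAt.comp_const_sub c b)).add_const _).add_const _
  rw [pd2, hd.deriv, cycleSum]
  simp only [Pi.neg_apply, Pi.zero_apply, add_zero]

lemma pd3_cycleSum (hg : Differentiable ℝ g) (hh : Differentiable ℝ h) :
    pd3 (cycleSum f g h k) = cycleSum 0 (deriv g) (-deriv h) 0 := by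
  ext a b c
  have hd : HasDerivAt (fun z => cycleSum f g h k a b z)
      (deriv g (c - b) + -deriv h (0 - c)) c :=
    (((((hg _).hasDerivAt.comp_sub_const c b).const_add _).add
      ((hh _).hasDerivAt.comp_const_sub 0 c))).add_const _
  rw [pd3, hd.deriv, cycleSum]
  simp only [Pi.neg_apply, Pi.zero_apply, add_zero, zero_add]

end cycleSum

section
variable {r1 r2 r3 r4 : ℝ}

lemma L4_eq_cycleSum :
    L4 r1 r2 r3 r4 = cycleSum (ell r1 r2) (ell r2 r3) (ell r3 r4) (ell r4 r1) := rfl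

lemma hess4_eq (h12 : ContDiff ℝ 2 (ell r1 r2)) (h23 : ContDiff ℝ 2 (ell r2 r3))
    (h34 : ContDiff ℝ 2 (ell r3 r4)) (h41 : ContDiff ℝ 2 (ell r4 r1)) (a b c : ℝ) :
    hess4 r1 r2 r3 r4 a b c =
      !![deriv (deriv (ell r1 r2)) (b - a) + deriv (deriv (ell r4 r1)) a,
          -deriv (deriv (ell r1 r2)) (b - a), 0;
        -deriv (deriv (ell r1 r2)) (b - a),
          deriv (deriv (ell r1 r2)) (b - a) + deriv (deriv (ell r2 r3)) (c - b),
          -deriv (deriv (ell r2 r3)) (c - b);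
        0, -deriv (deriv (ell r2 r3)) (c - b),
          deriv (deriv (ell r2 r3)) (c - b) + deriv (deriv (ell r3 r4)) (-c)] := by
  have := h12.differentiable_deriv_two
  have := h23.differentiable_deriv_two
  have := h34.differentiable_deriv_two
  have := h41.differentiable_deriv_two
  have := h12.differentiable (by norm_num)
  have := h23.differentiable (by norm_num)
  have := h34.differentiable (by norm_num)
  have := h41.differentiable (by norm_num)
  simp (disch := fun_prop) only [hess4, L4_eq_cycleSum, pd1_cycleSum, pd2_cycleSum,
    pd3_cycleSum, cycleSum, deriv.neg', deriv_zero, Pi.neg_apply, Pi.zero_apply, neg_neg,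
    neg_zero, add_zero, zero_add, sub_zero, zero_sub]

lemma hess4_parade (h1 : 0 < r1) (h2 : 0 < r2) (h3 : 0 < r3) (h4 : 0 < r4) (h12 : r1 ≠ r2)
    (h23 : r2 ≠ r3) (h34 : r3 ≠ r4) (h41 : r4 ≠ r1) :
    hess4 r1 r2 r3 r4 π 0 π =
      -!![r4 * r1 / (r4 + r1) + r1 * r2 / (r1 + r2), -(r1 * r2 / (r1 + r2)), 0;
        -(r1 * r2 / (r1 + r2)), r1 * r2 / (r1 + r2) + r2 * r3 / (r2 + r3), -(r2 * r3 / (r2 + r3));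
        0, -(r2 * r3 / (r2 + r3)), r2 * r3 / (r2 + r3) + r3 * r4 / (r3 + r4)] := by
  rw [hess4_eq (contDiff_ell h1 h2 h12) (contDiff_ell h2 h3 h23) (contDiff_ell h3 h4 h34)
      (contDiff_ell h4 h1 h41),
    deriv_deriv_ell_of_cos_eq_neg_one h1 h2 h12 (by simp),
    deriv_deriv_ell_of_cos_eq_neg_one h2 h3 h23 (by simp),
    deriv_deriv_ell_of_cos_eq_neg_one h3 h4 h34 (by simp),
    deriv_deriv_ell_of_cos_eq_neg_one h4 h1 h41 (by simp)]
  ext i j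
  fin_cases i <;> fin_cases j <;> simp <;> ring

lemma L4_le (h1 : 0 ≤ r1) (h2 : 0 ≤ r2) (h3 : 0 ≤ r3) (h4 : 0 ≤ r4) (a b c : ℝ) :
    L4 r1 r2 r3 r4 a b c ≤ (r1 + r2) + (r2 + r3) + (r3 + r4) + (r4 + r1) := by
  unfold L4
  gcongr <;> exact ell_le_add ‹_› ‹_› _

lemma L4_parade (h1 : 0 ≤ r1) (h2 : 0 ≤ r2) (h3 : 0 ≤ r3) (h4 : 0 ≤ r4) :
    L4 r1 r2 r3 r4 π 0 π = (r1 + r2) + (r2 + r3) + (r3 + r4) + (r4 + r1) := by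
  unfold L4
  rw [ell_eq_add_of_cos_eq_neg_one h1 h2 (by simp), ell_eq_add_of_cos_eq_neg_one h2 h3 (by simp),
    ell_eq_add_of_cos_eq_neg_one h3 h4 (by simp), ell_eq_add_of_cos_eq_neg_one h4 h1 (by simp)]

end

lemma posDef_tridiagonal {p q s t : ℝ} (hp : 0 < p) (hq : 0 < q) (hs : 0 < s) (ht : 0 < t) :
    (!![p + q, -q, 0; -q, q + s, -s; 0, -s, s + t]).PosDef := by
  refine Matrix.PosDef.of_dotProduct_mulVec_pos ?_ fun x hx => ?_
  · ext i j
    fin_cases i <;> fin_cases j <;> simp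
  · have hquad : dotProduct (star x) ((!![p + q, -q, 0; -q, q + s, -s; 0, -s, s + t]).mulVec x) =
        p * x 0 ^ 2 + q * (x 0 - x 1) ^ 2 + s * (x 1 - x 2) ^ 2 + t * x 2 ^ 2 := by
      simp [dotProduct, Matrix.mulVec, Fin.sum_univ_three]
      ring
    rw [hquad]
    by_contra! hle
    have t0 := mul_nonneg hp.le (sq_nonneg (x 0))
    have t1 := mul_nonneg hq.le (sq_nonneg (x 0 - x 1))
    have t2 := mul_nonneg hs.le (sq_nonneg (x 1 - x 2))
    have t3 := mul_nonneg ht.le (sq_nonneg (x 2))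
    have e0 : p * x 0 ^ 2 = 0 := by linarith
    have e1 : q * (x 0 - x 1) ^ 2 = 0 := by linarith
    have e3 : t * x 2 ^ 2 = 0 := by linarith
    simp only [mul_eq_zero, hp.ne', hq.ne', ht.ne', false_or, sq_eq_zero_iff, sub_eq_zero]
      at e0 e1 e3
    apply hx
    ext i
    fin_cases i <;> simp [e0, e3, ← e1]

/-- Example B: for `0 < r1 < r2 < r3 < r4` the Hessian of the perimeter at
the parade `(α₁, α₂, α₃, α₄) = (π, 0, π, 0)` (signed coordinates `(−r1, r2, −r3, r4)`) is
negative definite; hence this parade is a nondegenerate local maximum of the perimeter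
(Morse index 3). -/
theorem stmt_19 (r1 r2 r3 r4 : ℝ) (h1 : 0 < r1) (h12 : r1 < r2) (h23 : r2 < r3)
    (h34 : r3 < r4) :
    (-(hess4 r1 r2 r3 r4 π 0 π)).PosDef ∧
    IsLocalMax (fun q : ℝ × ℝ × ℝ => L4 r1 r2 r3 r4 q.1 q.2.1 q.2.2) (π, 0, π) := by
  have h2 : 0 < r2 := h1.trans h12
  have h3 : 0 < r3 := h2.trans h23
  have h4 : 0 < r4 := h3.trans h34
  refine ⟨?_, Filter.Eventually.of_forall fun q => ?_⟩
  · rw [hess4_parade h1 h2 h3 h4 h12.ne h23.ne h34.ne (h12.trans (h23.trans h34)).ne', neg_neg]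
    exact posDef_tridiagonal (by positivity) (by positivity) (by positivity) (by positivity)
  · exact (L4_le h1.le h2.le h3.le h4.le _ _ _).trans_eq (L4_parade h1.le h2.le h3.le h4.le).symm
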